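/- arXiv:2107.03041 — 3 statements merged into one kernel-verified Lean document; each statement's English description precedes it below -/
import Mathlib

section
/- For any real number x, the integral over ℝ of (1 - cos(sx))/s² ds equals π·|x|. -/
/-!
Since `1 / s² = ∫₀^∞ t e^{-ts} dt` and the integrand is nonnegative, Fubini turns
`∫₀^∞ (1 - cos s) / s² ds` into `∫₀^∞ t L(t) dt`, where `L(t) = 1/t - t/(1 + t²)` is the Laplace
transform of `1 - cos`; thus it equals `∫₀^∞ dt / (1 + t²) = π / 2`. Evenness doubles this, and
the substitution `u = s x` produces the factor `|x|`.
-/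

open Real MeasureTheory Set

lemma integral_exp_neg_mul_cos_Ioi {t : ℝ} (ht : 0 < t) :
    ∫ s in Ioi (0 : ℝ), exp (-t * s) * cos s = t / (1 + t ^ 2) := by
  have hre : ((-t : ℂ) + Complex.I).re < 0 := by simpa using ht
  have hpt (s : ℝ) : exp (-t * s) * cos s = RCLike.re (Complex.exp ((-t + Complex.I) * s)) := by
    simp [Complex.exp_re]
  simp_rw [hpt]
  rw [integral_re (integrableOn_exp_mul_complex_Ioi hre 0), integral_exp_mul_complex_Ioi hre]
  simp only [Complex.ofReal_zero, mul_zero, Complex.exp_zero, RCLike.re_to_complex,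
    Complex.div_re, Complex.neg_re, Complex.one_re, Complex.add_re, Complex.ofReal_re,
    Complex.I_re, add_zero, Complex.normSq_apply, Complex.add_im, Complex.neg_im,
    Complex.ofReal_im, neg_zero, Complex.I_im, zero_add, Complex.one_im]
  field_simp
  ring

lemma integral_exp_neg_mul_one_sub_cos_Ioi {t : ℝ} (ht : 0 < t) :
    ∫ s in Ioi (0 : ℝ), exp (-t * s) * (1 - cos s) = (t * (1 + t ^ 2))⁻¹ := by
  have hexp := exp_neg_integrableOn_Ioi 0 ht
  have hcos : IntegrableOn (fun s : ℝ => exp (-t * s) * cos s) (Ioi 0) :=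
    hexp.mul_of_top_left (memLp_top_of_bound continuous_cos.aestronglyMeasurable 1
      (ae_of_all _ fun s => abs_cos_le_one s))
  simp_rw [mul_one_sub]
  rw [integral_sub hexp hcos, integral_exp_mul_Ioi (neg_lt_zero.2 ht),
    integral_exp_neg_mul_cos_Ioi ht, mul_zero, exp_zero]
  field_simp
  ring

lemma integral_mul_exp_neg_mul_Ioi {s : ℝ} (hs : 0 < s) :
    ∫ t in Ioi (0 : ℝ), t * exp (-t * s) = (s ^ 2)⁻¹ := by
  have h := integral_rpow_mul_exp_neg_mul_Ioi two_pos hs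
  rw [show (2 : ℝ) - 1 = 1 by norm_num, Gamma_two] at h
  simpa [mul_comm] using h

lemma integrable_prod_mul_exp_neg_mul_one_sub_cos :
    Integrable (fun p : ℝ × ℝ => p.2 * (exp (-p.2 * p.1) * (1 - cos p.1)))
      ((volume.restrict (Ioi 0)).prod (volume.restrict (Ioi 0))) := by
  rw [integrable_prod_iff' (by fun_prop : Continuous _).aestronglyMeasurable]
  constructor
  · filter_upwards [self_mem_ae_restrict measurableSet_Ioi] with t (ht : 0 < t)
    -- a non-integrable function has Bochner integral `0`
    refine (Integrable.of_integral_ne_zero ?_).const_mul t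
    rw [integral_exp_neg_mul_one_sub_cos_Ioi ht]
    exact inv_ne_zero (by positivity)
  · refine integrable_inv_one_add_sq.integrableOn.congr_fun (fun t (ht : 0 < t) => ?_)
      measurableSet_Ioi
    have hnorm (s : ℝ) :
        ‖t * (exp (-t * s) * (1 - cos s))‖ = t * (exp (-t * s) * (1 - cos s)) :=
      norm_of_nonneg (mul_nonneg ht.le (mul_nonneg (exp_pos _).le (sub_nonneg.2 (cos_le_one s))))
    simp_rw [hnorm]
    rw [integral_const_mul, integral_exp_neg_mul_one_sub_cos_Ioi ht]
    field_simp

lemma integral_one_sub_cos_div_sq_Ioi :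
    ∫ s in Ioi (0 : ℝ), (1 - cos s) / s ^ 2 = π / 2 := by
  calc ∫ s in Ioi (0 : ℝ), (1 - cos s) / s ^ 2
      = ∫ s in Ioi (0 : ℝ), ∫ t in Ioi (0 : ℝ), t * (exp (-t * s) * (1 - cos s)) := by
        refine setIntegral_congr_fun measurableSet_Ioi fun s hs => ?_
        simp_rw [← mul_assoc]
        rw [integral_mul_const, integral_mul_exp_neg_mul_Ioi hs, div_eq_inv_mul]
    _ = ∫ t in Ioi (0 : ℝ), ∫ s in Ioi (0 : ℝ), t * (exp (-t * s) * (1 - cos s)) :=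
        integral_integral_swap integrable_prod_mul_exp_neg_mul_one_sub_cos
    _ = ∫ t in Ioi (0 : ℝ), (1 + t ^ 2)⁻¹ := by
        refine setIntegral_congr_fun measurableSet_Ioi fun t (ht : 0 < t) => ?_
        rw [integral_const_mul, integral_exp_neg_mul_one_sub_cos_Ioi ht]
        field_simp
    _ = π / 2 := by simp [integral_Ioi_inv_one_add_sq]

lemma integral_one_sub_cos_div_sq : ∫ s : ℝ, (1 - cos s) / s ^ 2 = π := by
  have h := integral_comp_abs (f := fun s : ℝ => (1 - cos s) / s ^ 2)
  simp only [cos_abs, sq_abs] at h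
  rw [h, integral_one_sub_cos_div_sq_Ioi]
  ring

/-- For any real x, ∫_ℝ (1 - cos(sx))/s² ds = π·|x|. -/
theorem stmt_1 (x : ℝ) :
    (∫ s : ℝ, (1 - Real.cos (s * x)) / s ^ 2) = Real.pi * |x| := by
  rcases eq_or_ne x 0 with rfl | hx
  · simp
  have hscale (s : ℝ) :
      (1 - cos (s * x)) / s ^ 2 = x ^ 2 * ((1 - cos (s * x)) / (s * x) ^ 2) := by
    rcases eq_or_ne s 0 with rfl | hs
    · simp
    · field_simp
  simp_rw [hscale]
  rw [integral_const_mul, Measure.integral_comp_mul_right (fun u => (1 - cos u) / u ^ 2),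
    integral_one_sub_cos_div_sq, smul_eq_mul, abs_inv, ← sq_abs x]
  field_simp
end

section
/- Let X be a real random variable with E|X| < ∞, let X₁,…,Xₙ be (not necessarily independent) random variables each distributed as X, and let φ_X^{(n)}(s) = n^{-1}∑_{j=1}^n e^{isX_j} be the empirical characteristic function. Then almost surely ∫_ℝ |φ_X^{(n)}(s) − φ_X(s)|²/s² ds < ∞. -/
open MeasureTheory ProbabilityTheory

lemma my_norm_exp_mul_I_sub_one_le (t : ℝ) :
    ‖Complex.exp ((t : ℂ) * Complex.I) - 1‖ ≤ 2 * |t| := by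
  have habs : ‖(t : ℂ) * Complex.I‖ = |t| := by
    simp [map_mul]
  rcases le_or_gt |t| 1 with h | h
  · have := Complex.norm_exp_sub_one_le (x := (t : ℂ) * Complex.I) (by rw [habs]; exact h)
    rw [habs] at this
    simpa using this
  · have h1 : ‖Complex.exp ((t : ℂ) * Complex.I)‖ = 1 := by
      rw [Complex.norm_exp]
      simp
    calc ‖Complex.exp ((t : ℂ) * Complex.I) - 1‖
        ≤ ‖Complex.exp ((t : ℂ) * Complex.I)‖ + ‖(1 : ℂ)‖ := norm_sub_le _ _
      _ = 2 := by rw [h1]; norm_num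
      _ ≤ 2 * |t| := by nlinarith

lemma my_norm_exp_eq_one (s x : ℝ) : ‖Complex.exp ((s : ℂ) * (x : ℂ) * Complex.I)‖ = 1 := by
  rw [Complex.norm_exp]
  simp

lemma my_norm_exp_sub_one_le (s x : ℝ) :
    ‖Complex.exp ((s : ℂ) * (x : ℂ) * Complex.I) - 1‖ ≤ 2 * |s| * |x| := by
  have := my_norm_exp_mul_I_sub_one_le (s * x)
  rw [Complex.ofReal_mul] at this
  calc ‖Complex.exp ((s : ℂ) * (x : ℂ) * Complex.I) - 1‖ ≤ 2 * |s * x| := this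
    _ = 2 * |s| * |x| := by rw [abs_mul]; ring

/-- For X integrable and X₁,…,Xₙ each distributed as X, the empirical characteristic
    function satisfies, almost surely, ∫_ℝ |φ_X^{(n)}(s) − φ_X(s)|²/s² ds < ∞. -/
theorem stmt_4 {Ω : Type*} [MeasurableSpace Ω] (P : Measure Ω) [IsProbabilityMeasure P]
    (X : Ω → ℝ) (hX : Measurable X) (hint : Integrable X P)
    (n : ℕ) (hn : 0 < n) (X' : Fin n → Ω → ℝ) (hX' : ∀ j, Measurable (X' j))
    (hid : ∀ j, IdentDistrib (X' j) X P P) :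
    ∀ᵐ ω ∂P, Integrable (fun s : ℝ =>
      ‖(n : ℂ)⁻¹ * ∑ j, Complex.exp ((s : ℂ) * (X' j ω : ℂ) * Complex.I)
        - ∫ ω', Complex.exp ((s : ℂ) * (X ω' : ℂ) * Complex.I) ∂P‖ ^ 2 / s ^ 2) := by
  filter_upwards with ω
  set g : ℝ → ℂ := fun s => (n : ℂ)⁻¹ * ∑ j, Complex.exp ((s : ℂ) * (X' j ω : ℂ) * Complex.I)
        - ∫ ω', Complex.exp ((s : ℂ) * (X ω' : ℂ) * Complex.I) ∂P with hg_def
  set f : ℝ → ℝ := fun s => ‖g s‖ ^ 2 / s ^ 2 with hf_def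
  show Integrable f
  have hne : (n : ℂ) ≠ 0 := Nat.cast_ne_zero.mpr hn.ne'
  have hnR : (0:ℝ) < n := Nat.cast_pos.mpr hn
  -- integrability of the complex exponential in ω'
  have hmexp : ∀ s : ℝ, Measurable fun ω' => Complex.exp ((s : ℂ) * (X ω' : ℂ) * Complex.I) :=
    fun s => Complex.measurable_exp.comp
      ((measurable_const.mul (Complex.measurable_ofReal.comp hX)).mul measurable_const)
  have hint_exp : ∀ s : ℝ, Integrable (fun ω' => Complex.exp ((s : ℂ) * (X ω' : ℂ) * Complex.I)) P :=
    fun s => (integrable_const (1:ℝ)).mono' ((hmexp s).aestronglyMeasurable)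
      (Filter.Eventually.of_forall fun ω' => le_of_eq (my_norm_exp_eq_one s (X ω')))
  -- continuity of the characteristic function
  have hφcont : Continuous fun s : ℝ => ∫ ω', Complex.exp ((s : ℂ) * (X ω' : ℂ) * Complex.I) ∂P := by
    apply continuous_of_dominated (bound := fun _ => (1:ℝ))
    · exact fun s => (hmexp s).aestronglyMeasurable
    · exact fun s => Filter.Eventually.of_forall fun ω' => le_of_eq (my_norm_exp_eq_one s (X ω'))
    · exact integrable_const 1
    · exact Filter.Eventually.of_forall fun ω' => Complex.continuous_exp.comp
        (((Complex.continuous_ofReal).mul continuous_const).mul continuous_const)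
  have hgcont : Continuous g := by
    apply Continuous.sub _ hφcont
    exact continuous_const.mul (continuous_finset_sum _ fun j _ => Complex.continuous_exp.comp
      (((Complex.continuous_ofReal).mul continuous_const).mul continuous_const))
  have hf_meas : Measurable f :=
    ((hgcont.norm.pow 2).measurable).div (measurable_id.pow_const 2)
  have hf_nonneg : ∀ s, 0 ≤ f s := fun s => div_nonneg (by positivity) (sq_nonneg s)
  -- the constant C
  set C : ℝ := (n : ℝ)⁻¹ * ∑ j, |X' j ω| + ∫ ω', |X ω'| ∂P with hC_def
  have hC0 : 0 ≤ C := by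
    apply add_nonneg
    · positivity
    · exact integral_nonneg fun ω' => abs_nonneg _
  -- bound 1 : ‖g s‖ ≤ 2
  have hb2 : ∀ s, ‖g s‖ ≤ 2 := by
    intro s
    have h1 : ‖(n : ℂ)⁻¹ * ∑ j, Complex.exp ((s : ℂ) * (X' j ω : ℂ) * Complex.I)‖ ≤ 1 := by
      rw [norm_mul]
      have : ‖∑ j, Complex.exp ((s : ℂ) * (X' j ω : ℂ) * Complex.I)‖ ≤ (n:ℝ) := by
        calc ‖∑ j, Complex.exp ((s : ℂ) * (X' j ω : ℂ) * Complex.I)‖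
            ≤ ∑ j : Fin n, ‖Complex.exp ((s : ℂ) * (X' j ω : ℂ) * Complex.I)‖ :=
              norm_sum_le _ _
          _ = (n:ℝ) := by simp only [my_norm_exp_eq_one]; simp
      have hninv : ‖(n : ℂ)⁻¹‖ = (n:ℝ)⁻¹ := by
        rw [norm_inv]; norm_num
      rw [hninv]
      calc (n:ℝ)⁻¹ * ‖∑ j, Complex.exp ((s : ℂ) * (X' j ω : ℂ) * Complex.I)‖
          ≤ (n:ℝ)⁻¹ * (n:ℝ) := by
            apply mul_le_mul_of_nonneg_left this (by positivity)
        _ = 1 := inv_mul_cancel₀ hnR.ne'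
    have h2 : ‖∫ ω', Complex.exp ((s : ℂ) * (X ω' : ℂ) * Complex.I) ∂P‖ ≤ 1 := by
      calc ‖∫ ω', Complex.exp ((s : ℂ) * (X ω' : ℂ) * Complex.I) ∂P‖
          ≤ ∫ ω', ‖Complex.exp ((s : ℂ) * (X ω' : ℂ) * Complex.I)‖ ∂P :=
            norm_integral_le_integral_norm _
        _ = 1 := by simp only [my_norm_exp_eq_one]; simp
    calc ‖g s‖ ≤ ‖(n : ℂ)⁻¹ * ∑ j, Complex.exp ((s : ℂ) * (X' j ω : ℂ) * Complex.I)‖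
          + ‖∫ ω', Complex.exp ((s : ℂ) * (X ω' : ℂ) * Complex.I) ∂P‖ := norm_sub_le _ _
      _ ≤ 2 := by linarith
  -- rewriting g subtracting 1 in each term
  have hg_eq : ∀ s, g s = (n : ℂ)⁻¹ * ∑ j, (Complex.exp ((s : ℂ) * (X' j ω : ℂ) * Complex.I) - 1)
      - ∫ ω', (Complex.exp ((s : ℂ) * (X ω' : ℂ) * Complex.I) - 1) ∂P := by
    intro s
    rw [integral_sub (hint_exp s) (integrable_const 1), integral_const]
    simp only [hg_def, Finset.sum_sub_distrib, Finset.sum_const, Finset.card_univ,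
      Fintype.card_fin, nsmul_eq_mul, mul_one, mul_sub, measure_univ, ENNReal.toReal_one, probReal_univ,
      one_smul]
    rw [inv_mul_cancel₀ hne]
    ring
  -- bound 2 : ‖g s‖ ≤ 2 * C * |s|
  have hbl : ∀ s, ‖g s‖ ≤ 2 * C * |s| := by
    intro s
    rw [hg_eq s]
    have h1 : ‖(n : ℂ)⁻¹ * ∑ j, (Complex.exp ((s : ℂ) * (X' j ω : ℂ) * Complex.I) - 1)‖
        ≤ 2 * |s| * ((n:ℝ)⁻¹ * ∑ j, |X' j ω|) := by
      rw [norm_mul]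
      have hninv : ‖(n : ℂ)⁻¹‖ = (n:ℝ)⁻¹ := by rw [norm_inv]; norm_num
      rw [hninv]
      have hs : ‖∑ j, (Complex.exp ((s : ℂ) * (X' j ω : ℂ) * Complex.I) - 1)‖
          ≤ ∑ j : Fin n, 2 * |s| * |X' j ω| := by
        refine (norm_sum_le _ _).trans (Finset.sum_le_sum fun j _ => ?_)
        exact my_norm_exp_sub_one_le s (X' j ω)
      calc (n:ℝ)⁻¹ * ‖∑ j, (Complex.exp ((s : ℂ) * (X' j ω : ℂ) * Complex.I) - 1)‖
          ≤ (n:ℝ)⁻¹ * ∑ j : Fin n, 2 * |s| * |X' j ω| :=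
            mul_le_mul_of_nonneg_left hs (by positivity)
        _ = 2 * |s| * ((n:ℝ)⁻¹ * ∑ j, |X' j ω|) := by
            rw [← Finset.mul_sum]; ring
    have h2 : ‖∫ ω', (Complex.exp ((s : ℂ) * (X ω' : ℂ) * Complex.I) - 1) ∂P‖
        ≤ 2 * |s| * ∫ ω', |X ω'| ∂P := by
      calc ‖∫ ω', (Complex.exp ((s : ℂ) * (X ω' : ℂ) * Complex.I) - 1) ∂P‖
          ≤ ∫ ω', ‖Complex.exp ((s : ℂ) * (X ω' : ℂ) * Complex.I) - 1‖ ∂P :=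
            norm_integral_le_integral_norm _
        _ ≤ ∫ ω', 2 * |s| * |X ω'| ∂P := by
            apply integral_mono ((hint_exp s).sub (integrable_const 1)).norm
              ((hint.abs.const_mul _))
            exact fun ω' => my_norm_exp_sub_one_le s (X ω')
        _ = 2 * |s| * ∫ ω', |X ω'| ∂P := integral_const_mul _ _
    calc ‖_ - _‖ ≤ _ + _ := norm_sub_le _ _
      _ ≤ 2 * |s| * ((n:ℝ)⁻¹ * ∑ j, |X' j ω|) + 2 * |s| * ∫ ω', |X ω'| ∂P := add_le_add h1 h2
      _ = 2 * C * |s| := by rw [hC_def]; ring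
  -- dominating function at infinity
  set k : ℝ → ℝ := fun s => 4 * |s| ^ (-2:ℝ) with hk_def
  have hrpow : ∀ s : ℝ, 1 ≤ |s| → |s| ^ (-2:ℝ) = (s^2)⁻¹ := by
    intro s hs
    rw [show (-2:ℝ) = ((-2:ℤ):ℝ) by norm_num, Real.rpow_intCast, zpow_neg, zpow_two,
      abs_mul_abs_self, sq]
  have hfk : ∀ s : ℝ, 1 ≤ |s| → ‖f s‖ ≤ k s := by
    intro s hs
    have hs0 : s ≠ 0 := by rintro rfl; norm_num at hs
    have hs2 : (0:ℝ) < s ^ 2 := by positivity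
    rw [Real.norm_eq_abs, abs_of_nonneg (hf_nonneg s), hk_def]
    simp only
    rw [hrpow s hs, hf_def]
    simp only
    rw [div_le_iff₀ hs2, mul_assoc, inv_mul_cancel₀ hs2.ne', mul_one]
    nlinarith [hb2 s, norm_nonneg (g s)]
  have hk_Ici : IntegrableOn k (Set.Ici (1:ℝ)) := by
    rw [integrableOn_Ici_iff_integrableOn_Ioi]
    have base : IntegrableOn (fun s : ℝ => 4 * s ^ (-2:ℝ)) (Set.Ioi (1:ℝ)) :=
      (integrableOn_Ioi_rpow_of_lt (show (-2:ℝ) < -1 by norm_num) zero_lt_one).const_mul 4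
    apply base.congr_fun _ measurableSet_Ioi
    intro x hx
    rw [hk_def]
    simp only
    rw [abs_of_pos (lt_trans zero_lt_one hx)]
  have hk_Iic : IntegrableOn k (Set.Iic (-1:ℝ)) := by
    have hmap : (volume : Measure ℝ) = Measure.map Neg.neg volume :=
      (Measure.map_neg_eq_self (volume : Measure ℝ)).symm
    rw [IntegrableOn, hmap, ← IntegrableOn,
      measurableEmbedding_neg.integrableOn_map_iff]
    have hpre : (Neg.neg ⁻¹' Set.Iic (-1:ℝ)) = Set.Ici 1 := by
      ext x; simp
    rw [hpre]
    apply hk_Ici.congr_fun _ measurableSet_Ici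
    intro x _
    simp [hk_def, Function.comp]
  -- piece on [-1, 1]
  have hIcc : IntegrableOn f (Set.Icc (-1:ℝ) 1) := by
    refine Measure.integrableOn_of_bounded (M := (2*C)^2)
      (isCompact_Icc.measure_lt_top).ne hf_meas.aestronglyMeasurable ?_
    refine Filter.Eventually.of_forall fun s => ?_
    rw [Real.norm_eq_abs, abs_of_nonneg (hf_nonneg s)]
    rcases eq_or_ne s 0 with rfl | hs0
    · simp [hf_def]
      positivity
    · have hs2 : (0:ℝ) < s ^ 2 := by positivity
      rw [hf_def]
      simp only
      rw [div_le_iff₀ hs2]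
      have := hbl s
      nlinarith [norm_nonneg (g s), abs_nonneg s, sq_abs s]
  have hIci : IntegrableOn f (Set.Ici (1:ℝ)) := by
    apply Integrable.mono' hk_Ici hf_meas.aestronglyMeasurable.restrict
    rw [ae_restrict_iff' measurableSet_Ici]
    refine Filter.Eventually.of_forall fun s hs => ?_
    exact hfk s (by rw [abs_of_pos (lt_of_lt_of_le zero_lt_one hs)]; exact hs)
  have hIic : IntegrableOn f (Set.Iic (-1:ℝ)) := by
    apply Integrable.mono' hk_Iic hf_meas.aestronglyMeasurable.restrict
    rw [ae_restrict_iff' measurableSet_Iic]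
    refine Filter.Eventually.of_forall fun s hs => ?_
    simp only [Set.mem_Iic] at hs
    refine hfk s ?_
    rw [abs_of_neg (by linarith : s < 0)]
    linarith
  rw [← integrableOn_univ]
  have huniv : (Set.univ : Set ℝ) = Set.Iic (-1) ∪ (Set.Icc (-1) 1 ∪ Set.Ici 1) := by
    ext x
    simp only [Set.mem_univ, Set.mem_union, Set.mem_Iic, Set.mem_Icc, Set.mem_Ici, true_iff]
    rcases le_total x (-1) with h | h
    · exact Or.inl h
    · rcases le_total x 1 with h' | h'
      · exact Or.inr (Or.inl ⟨h, h'⟩)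
      · exact Or.inr (Or.inr h')
  rw [huniv]
  exact hIic.union (hIcc.union hIci)
end

section
/- Let X₁, Y₁ be independent standard Gaussian and f_{s,t}(X₁,Y₁) = (e^{isX₁} − e^{−s²/2})(e^{itY₁} − e^{−t²/2}). Then for all l ∈ ℕ: E[Re f_{s,t}(X₁,Y₁)·H_l(X₁)] = 0 and E[Re f_{s,t}(X₁,Y₁)·H_l(Y₁)] = 0, i.e., all bivariate Hermite coefficients J_{l,0} and J_{0,l} of Re f_{s,t} vanish. Moreover E[Im f_{s,t}(X₁,Y₁)·X₁·Y₁] = 0. -/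
/-!
Write `A_u(x) = e^{iux} - e^{-u²/2}`, the characteristic exponential centered under `N(0,1)`.
The integrand factors as `A_s(X₁) A_t(Y₁)`, so by Fubini every coefficient is the real or
imaginary part of a product `E[A_s(X₁) g(X₁)] · E[A_t(Y₁) h(Y₁)]`. For the Hermite coefficients
one factor is `E[A_u] = 0`. For `E[Im f · X₁ Y₁]` one needs `Re E[A_u(X) X] = 0`, which holds
because `(cos(uX) - e^{-u²/2}) X` is odd and `N(0,1)` is symmetric.
-/

open MeasureTheory ProbabilityTheory Complex Polynomial

local notation "γ" => gaussianReal 0 1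

section Product
variable {α β : Type*} [MeasurableSpace α] [MeasurableSpace β] {μ : Measure α} {ν : Measure β}
  [SFinite μ] [SFinite ν] {F : α → ℂ} {G : β → ℂ}

lemma integral_re_mul_prod (hF : Integrable F μ) (hG : Integrable G ν) :
    ∫ p, (F p.1 * G p.2).re ∂μ.prod ν = ((∫ x, F x ∂μ) * ∫ y, G y ∂ν).re := by
  rw [← integral_prod_mul]
  exact integral_re (hF.mul_prod hG)

lemma integral_im_mul_prod (hF : Integrable F μ) (hG : Integrable G ν) :
    ∫ p, (F p.1 * G p.2).im ∂μ.prod ν = ((∫ x, F x ∂μ) * ∫ y, G y ∂ν).im := by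
  rw [← integral_prod_mul]
  exact integral_im (hF.mul_prod hG)

end Product

lemma integral_eq_zero_of_odd {G E : Type*} [MeasurableSpace G] [AddGroup G] [MeasurableNeg G]
    [NormedAddCommGroup E] [NormedSpace ℝ E] {μ : Measure G} [μ.IsNegInvariant] {f : G → E}
    (hf : ∀ x, f (-x) = -f x) : ∫ x, f x ∂μ = 0 := by
  have h := integral_neg_eq_self f μ
  simp only [hf, integral_neg] at h
  have h2 : (2 : ℝ) • ∫ x, f x ∂μ = 0 := by
    rw [two_smul]
    nth_rewrite 1 [← h]
    exact neg_add_cancel _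
  exact (smul_eq_zero.mp h2).resolve_left two_ne_zero

instance {v : NNReal} : (gaussianReal 0 v).IsNegInvariant :=
  ⟨(gaussianReal_map_neg (μ := 0) (v := v)).trans (by rw [neg_zero])⟩

lemma integrable_aeval_of_integrable_pow {R : Type*} [CommSemiring R] [Algebra R ℝ]
    {μ : Measure ℝ} (h : ∀ n : ℕ, Integrable (fun x => x ^ n) μ) (q : R[X]) :
    Integrable (fun x => aeval x q) μ := by
  induction q using Polynomial.induction_on' with
  | add p q hp hq =>
    simp only [map_add]
    exact hp.add hq
  | monomial n a => simpa [aeval_monomial] using (h n).const_mul (algebraMap R ℝ a)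

lemma integrable_pow_gaussianReal (m : ℝ) (v : NNReal) (n : ℕ) :
    Integrable (fun x => x ^ n) (gaussianReal m v) :=
  integrable_pow_of_mem_interior_integrableExpSet (by simp) n

lemma integral_cexp_gaussianReal (u : ℝ) :
    ∫ x, cexp (u * x * I) ∂γ = Real.exp (-(u ^ 2) / 2) := by
  rw [← charFun_apply_real, charFun_gaussianReal]
  push_cast
  ring_nf

noncomputable def centeredExp (u x : ℝ) : ℂ := cexp (u * x * I) - Real.exp (-(u ^ 2) / 2)

lemma continuous_centeredExp (u : ℝ) : Continuous (centeredExp u) := by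
  unfold centeredExp
  fun_prop

lemma norm_centeredExp_le (u x : ℝ) : ‖centeredExp u x‖ ≤ 2 := by
  have h_exp : ‖cexp (u * x * I)‖ = 1 := by
    rw [← ofReal_mul, norm_exp_ofReal_mul_I]
  have h_const : ‖(Real.exp (-(u ^ 2) / 2) : ℂ)‖ ≤ 1 := by
    rw [norm_real, Real.norm_of_nonneg (Real.exp_nonneg _), Real.exp_le_one_iff]
    nlinarith [sq_nonneg u]
  calc ‖centeredExp u x‖ ≤ ‖cexp (u * x * I)‖ + ‖(Real.exp (-(u ^ 2) / 2) : ℂ)‖ :=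
        norm_sub_le _ _
    _ ≤ 2 := by linarith

lemma re_centeredExp (u x : ℝ) :
    (centeredExp u x).re = Real.cos (u * x) - Real.exp (-(u ^ 2) / 2) := by
  rw [centeredExp, sub_re, ← ofReal_mul, exp_ofReal_mul_I_re, ofReal_re]

lemma integrable_centeredExp_mul {μ : Measure ℝ} {g : ℝ → ℂ} (u : ℝ) (hg : Integrable g μ) :
    Integrable (fun x => centeredExp u x * g x) μ :=
  hg.bdd_mul (continuous_centeredExp u).aestronglyMeasurable
    (ae_of_all _ (norm_centeredExp_le u))

lemma integrable_centeredExp {μ : Measure ℝ} [IsFiniteMeasure μ] (u : ℝ) :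
    Integrable (centeredExp u) μ := by
  simpa using integrable_centeredExp_mul u (integrable_const (1 : ℂ) (μ := μ))

lemma integral_centeredExp (u : ℝ) : ∫ x, centeredExp u x ∂γ = 0 := by
  have h_int : Integrable (fun x : ℝ => cexp (u * x * I)) γ :=
    ((integrable_centeredExp u).add (integrable_const _)).congr
      (ae_of_all _ fun x => sub_add_cancel _ (Real.exp (-(u ^ 2) / 2) : ℂ))
  unfold centeredExp
  rw [integral_sub h_int (integrable_const _), integral_cexp_gaussianReal]
  simp

section StandardGaussianPair

variable {R : Type*} [CommSemiring R] [Algebra R ℝ]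

lemma integrable_centeredExp_mul_aeval (u : ℝ) (q : R[X]) :
    Integrable (fun x => centeredExp u x * (aeval x q : ℝ)) γ :=
  integrable_centeredExp_mul u
    (integrable_aeval_of_integrable_pow (integrable_pow_gaussianReal 0 1) q).ofReal

lemma integrable_centeredExp_mul_id (u : ℝ) :
    Integrable (fun x : ℝ => centeredExp u x * x) γ := by
  simpa using integrable_centeredExp_mul_aeval (R := ℝ) u X

lemma re_integral_centeredExp_mul_id (u : ℝ) : (∫ x, centeredExp u x * x ∂γ).re = 0 := by
  rw [← reCLM_apply, ← reCLM.integral_comp_comm (integrable_centeredExp_mul_id u)]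
  refine integral_eq_zero_of_odd fun x => ?_
  simp only [reCLM_apply, re_mul_ofReal, re_centeredExp, mul_neg, Real.cos_neg]

lemma integral_re_centeredExp_mul_aeval_fst (s t : ℝ) (q : R[X]) :
    ∫ p : ℝ × ℝ, (centeredExp s p.1 * centeredExp t p.2).re * aeval p.1 q ∂Measure.prod γ γ
      = 0 := by
  calc _ = ∫ p : ℝ × ℝ, (centeredExp s p.1 * (aeval p.1 q : ℝ) * centeredExp t p.2).re
        ∂Measure.prod γ γ := by
        congr 1 with p
        rw [mul_right_comm, re_mul_ofReal]
    _ = ((∫ x, centeredExp s x * (aeval x q : ℝ) ∂γ) * ∫ y, centeredExp t y ∂γ).re :=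
        integral_re_mul_prod (integrable_centeredExp_mul_aeval s q) (integrable_centeredExp t)
    _ = 0 := by rw [integral_centeredExp, mul_zero, zero_re]

lemma integral_re_centeredExp_mul_aeval_snd (s t : ℝ) (q : R[X]) :
    ∫ p : ℝ × ℝ, (centeredExp s p.1 * centeredExp t p.2).re * aeval p.2 q ∂Measure.prod γ γ
      = 0 := by
  calc _ = ∫ p : ℝ × ℝ, (centeredExp s p.1 * (centeredExp t p.2 * (aeval p.2 q : ℝ))).re
        ∂Measure.prod γ γ := by
        congr 1 with p
        rw [← mul_assoc, re_mul_ofReal]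
    _ = ((∫ x, centeredExp s x ∂γ) * ∫ y, centeredExp t y * (aeval y q : ℝ) ∂γ).re :=
        integral_re_mul_prod (integrable_centeredExp s) (integrable_centeredExp_mul_aeval t q)
    _ = 0 := by rw [integral_centeredExp, zero_mul, zero_re]

end StandardGaussianPair

lemma integral_im_centeredExp_mul_fst_mul_snd (s t : ℝ) :
    ∫ p : ℝ × ℝ, (centeredExp s p.1 * centeredExp t p.2).im * p.1 * p.2 ∂Measure.prod γ γ
      = 0 := by
  calc _ = ∫ p : ℝ × ℝ, (centeredExp s p.1 * p.1 * (centeredExp t p.2 * p.2)).im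
        ∂Measure.prod γ γ := by
        congr 1 with p
        rw [mul_mul_mul_comm, ← ofReal_mul, im_mul_ofReal, mul_assoc]
    _ = _ := integral_im_mul_prod (integrable_centeredExp_mul_id s)
        (integrable_centeredExp_mul_id t)
    _ = 0 := by
        rw [mul_im, re_integral_centeredExp_mul_id, re_integral_centeredExp_mul_id,
          zero_mul, mul_zero, add_zero]

/-- For X₁ ⊥ Y₁ standard Gaussian and
    f_{s,t}(X₁,Y₁) = (e^{isX₁} − e^{−s²/2})(e^{itY₁} − e^{−t²/2}): all bivariate Hermite
    coefficients J_{l,0} and J_{0,l} of Re f_{s,t} vanish, and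
    E[Im f_{s,t}(X₁,Y₁)·X₁·Y₁] = 0. -/
theorem stmt_12 (s t : ℝ) :
    (∀ l : ℕ,
      (∫ p : ℝ × ℝ,
          ((Complex.exp ((s : ℂ) * (p.1 : ℂ) * Complex.I) - (Real.exp (-(s ^ 2) / 2) : ℂ))
            * (Complex.exp ((t : ℂ) * (p.2 : ℂ) * Complex.I)
                - (Real.exp (-(t ^ 2) / 2) : ℂ))).re
          * (Polynomial.aeval p.1 (Polynomial.hermite l) : ℝ)
        ∂((gaussianReal 0 1).prod (gaussianReal 0 1))) = 0) ∧
    (∀ l : ℕ,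
      (∫ p : ℝ × ℝ,
          ((Complex.exp ((s : ℂ) * (p.1 : ℂ) * Complex.I) - (Real.exp (-(s ^ 2) / 2) : ℂ))
            * (Complex.exp ((t : ℂ) * (p.2 : ℂ) * Complex.I)
                - (Real.exp (-(t ^ 2) / 2) : ℂ))).re
          * (Polynomial.aeval p.2 (Polynomial.hermite l) : ℝ)
        ∂((gaussianReal 0 1).prod (gaussianReal 0 1))) = 0) ∧
    (∫ p : ℝ × ℝ,
        ((Complex.exp ((s : ℂ) * (p.1 : ℂ) * Complex.I) - (Real.exp (-(s ^ 2) / 2) : ℂ))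
          * (Complex.exp ((t : ℂ) * (p.2 : ℂ) * Complex.I)
              - (Real.exp (-(t ^ 2) / 2) : ℂ))).im * p.1 * p.2
      ∂((gaussianReal 0 1).prod (gaussianReal 0 1))) = 0 := by
  exact ⟨fun l => integral_re_centeredExp_mul_aeval_fst s t (hermite l),
    fun l => integral_re_centeredExp_mul_aeval_snd s t (hermite l),
    integral_im_centeredExp_mul_fst_mul_snd s t⟩
end
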